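/- Let P = ({E_k : k ∈ K}, {M_0, M_1}) be a concurrent quantum program on ℂ^d with |K| = m and input a partial density operator ρ_0. Then P terminates in the fair schedule F (the set of all fair infinite paths) if and only if it terminates in the schedule Π^ω, where Π = { s_1σ_1s_2σ_2⋯σ_{m−1}s_m : s_1s_2⋯s_m is a permutation of K and each σ_i ∈ K* has length |σ_i| < d } and Π^ω is the set of infinite paths obtained by concatenating infinitely many elements of Π. -/

import Mathlib

open Matrix
open scoped ComplexOrder

/-- The support of a matrix `ρ`, i.e. the range (column space) of `ρ`. -/
noncomputable def matSupp {d : ℕ} (ρ : Matrix (Fin d) (Fin d) ℂ) :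
    Submodule ℂ (Fin d → ℂ) :=
  LinearMap.range ρ.mulVecLin

/-- The super-operator `F_k(ρ) = E_k(M₁ ρ M₁ᴴ)` of process `k`, where the
super-operator `E_k` has Kraus operators `E k i`. -/
noncomputable def progF {d m n : ℕ} (E : Fin m → Fin n → Matrix (Fin d) (Fin d) ℂ)
    (M₁ : Matrix (Fin d) (Fin d) ℂ) (k : Fin m)
    (ρ : Matrix (Fin d) (Fin d) ℂ) : Matrix (Fin d) (Fin d) ℂ :=
  ∑ i, E k i * (M₁ * ρ * M₁ᴴ) * (E k i)ᴴ

/-- For a finite string `f = s₁s₂⋯sₙ`, the super-operator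
`F_f = F_{sₙ} ∘ ⋯ ∘ F_{s₂} ∘ F_{s₁}` (the identity for the empty string). -/
noncomputable def progFStr {d m n : ℕ} (E : Fin m → Fin n → Matrix (Fin d) (Fin d) ℂ)
    (M₁ : Matrix (Fin d) (Fin d) ℂ) :
    List (Fin m) → Matrix (Fin d) (Fin d) ℂ → Matrix (Fin d) (Fin d) ℂ
  | [], ρ => ρ
  | k :: f, ρ => progFStr E M₁ f (progF E M₁ k ρ)

/-- The length-`N` prefix `s[N] = s₁⋯s_N` of an infinite path `s`. -/
def prefixOf {m : ℕ} (s : ℕ → Fin m) (N : ℕ) : List (Fin m) :=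
  List.ofFn fun i : Fin N => s i

/-- An infinite path is fair if every process occurs infinitely often in it. -/
def Fair {m : ℕ} (s : ℕ → Fin m) : Prop :=
  ∀ k : Fin m, ∀ N : ℕ, ∃ j ≥ N, s j = k

/-- The set `Π` of finite strings of the form `s₁σ₁s₂σ₂⋯σ_{m−1}s_m`, where
`s₁s₂⋯s_m` is a permutation of `K = {1,…,m}` and each `σᵢ` is a finite string of
length `< d`.  (The interleaved string `t i` after the last symbol is required
to be empty.) -/
def PiPieces (m d : ℕ) : Set (List (Fin m)) :=
  { f | ∃ p : Equiv.Perm (Fin m), ∃ t : Fin m → List (Fin m),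
      (∀ i, (t i).length < d) ∧ (∀ i : Fin m, (i : ℕ) = m - 1 → t i = []) ∧
      f = (List.ofFn fun i => p i :: t i).flatten }

/-- Membership in `A^ω`: the infinite path `s` is an infinite concatenation
`g₀g₁g₂⋯` of elements of `A`. -/
def InOmega {m : ℕ} (A : Set (List (Fin m))) (s : ℕ → Fin m) : Prop :=
  ∃ g : ℕ → List (Fin m), (∀ i, g i ∈ A) ∧
    ∀ N : ℕ, prefixOf s (((List.range N).map g).flatten).length
      = ((List.range N).map g).flatten


/-!
A path in `Π^ω` contains every process in each of its pieces, so it is fair. Conversely, the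
kernel of `∑_{|w| ≤ j} F_w(ρ)` shrinks with `j`, and the next kernel depends monotonically on the
current one, so once it stops shrinking it is constant; in dimension `d` this happens by
`j = d - 1`. Hence a suffix annihilating `F_w(ρ)` for all words `|w| < d` annihilates `F_u(ρ)`
for every `u`: whatever a nonterminating run does before the next occurrence of a process can be
replaced by a detour shorter than `d`. Starting from a fair nonterminating path and visiting the
processes in turn through such detours, one builds a nonterminating path in `Π^ω`.
-/

section Kernel

variable {𝕜 ι κ : Type*} [RCLike 𝕜] [Fintype ι]

def matKer (A : Matrix ι ι 𝕜) : Submodule 𝕜 (ι → 𝕜) :=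
  LinearMap.ker A.mulVecLin

@[simp]
lemma mem_matKer {A : Matrix ι ι 𝕜} {v : ι → 𝕜} : v ∈ matKer A ↔ A *ᵥ v = 0 := by
  simp [matKer]

lemma matKer_eq_top_iff {A : Matrix ι ι 𝕜} : matKer A = ⊤ ↔ A = 0 := by
  refine ⟨fun h => mulVec_injective (funext fun v => ?_), fun h => by ext; simp [h]⟩
  simpa using (Submodule.eq_top_iff'.mp h v : v ∈ matKer A)

lemma Matrix.PosSemidef.matKer_add {A B : Matrix ι ι 𝕜} (hA : A.PosSemidef) (hB : B.PosSemidef) :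
    matKer (A + B) = matKer A ⊓ matKer B := by
  ext v
  simp only [Submodule.mem_inf, mem_matKer, add_mulVec]
  refine ⟨fun h => ?_, fun ⟨hAv, hBv⟩ => by rw [hAv, hBv, add_zero]⟩
  have hsum : star v ⬝ᵥ A *ᵥ v + star v ⬝ᵥ B *ᵥ v = 0 := by
    rw [← dotProduct_add, h, dotProduct_zero]
  obtain ⟨hA0, hB0⟩ := (add_eq_zero_iff_of_nonneg (hA.dotProduct_mulVec_nonneg v)
    (hB.dotProduct_mulVec_nonneg v)).mp hsum
  exact ⟨(hA.dotProduct_mulVec_zero_iff v).mp hA0, (hB.dotProduct_mulVec_zero_iff v).mp hB0⟩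

lemma Matrix.PosSemidef.matKer_sum {s : Finset κ} {A : κ → Matrix ι ι 𝕜}
    (hA : ∀ i ∈ s, (A i).PosSemidef) : matKer (∑ i ∈ s, A i) = ⨅ i ∈ s, matKer (A i) := by
  classical
  induction s using Finset.induction with
  | empty => simp [matKer_eq_top_iff.mpr]
  | insert a s ha ih =>
    rw [Finset.sum_insert ha, Finset.iInf_insert, (hA a (by simp)).matKer_add
      (posSemidef_sum s fun i hi => hA i (by simp [hi])), ih fun i hi => hA i (by simp [hi])]

lemma Matrix.PosSemidef.matKer_mul_mul_conjTranspose [Fintype κ] {A : Matrix ι ι 𝕜}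
    (hA : A.PosSemidef) (C : Matrix κ ι 𝕜) :
    matKer (C * A * Cᴴ) = (matKer A).comap Cᴴ.mulVecLin := by
  ext v
  simp only [Submodule.mem_comap, mem_matKer, mulVecLin_apply, ← mulVec_mulVec]
  refine ⟨fun h => (hA.dotProduct_mulVec_zero_iff _).mp ?_, fun h => by rw [h, mulVec_zero]⟩
  rw [star_mulVec, conjTranspose_conjTranspose, ← dotProduct_mulVec, h, dotProduct_zero]

end Kernel

section Stabilization

variable {𝕜 V : Type*} [DivisionRing 𝕜] [AddCommGroup V] [Module 𝕜 V] [FiniteDimensional 𝕜 V]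

lemma Submodule.exists_succ_eq_of_antitone {K : ℕ → Submodule 𝕜 V} (hK : Antitone K) {n : ℕ}
    (hn : Module.finrank 𝕜 (K 0) ≤ n) : ∃ j ≤ n, K (j + 1) = K j := by
  by_contra! hne
  have hdrop : ∀ j ≤ n + 1, Module.finrank 𝕜 (K j) + j ≤ Module.finrank 𝕜 (K 0) := by
    intro j hj
    induction j with
    | zero => simp
    | succ j ih =>
      have := Submodule.finrank_lt_finrank_of_lt
        (lt_of_le_of_ne (hK (by omega : j ≤ j + 1)) (hne j (by omega)))
      have := ih (by omega)
      omega
  have := hdrop (n + 1) le_rfl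
  omega

/-- A chain of subspaces whose next term depends monotonically on the current one stops
shrinking after at most `dim K 0` steps. -/
lemma Submodule.le_of_succ_mono {K : ℕ → Submodule 𝕜 V} (h10 : K 1 ≤ K 0)
    (hstep : ∀ i j, K i ≤ K j → K (i + 1) ≤ K (j + 1)) {n : ℕ}
    (hn : Module.finrank 𝕜 (K 0) ≤ n) (j : ℕ) : K n ≤ K j := by
  have hK : Antitone K := antitone_nat_of_succ_le fun j => by
    induction j with
    | zero => exact h10
    | succ j ih => exact hstep _ _ ih
  obtain ⟨j₀, hj₀n, hj₀⟩ := Submodule.exists_succ_eq_of_antitone hK hn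
  have hgrow : ∀ i ≥ j₀, K i ≤ K (i + 1) := fun i hi => by
    induction i, hi using Nat.le_induction with
    | base => exact hj₀.ge
    | succ i _ ih => exact hstep _ _ ih
  rcases le_total j n with hjn | hnj
  · exact hK hjn
  · induction j, hnj using Nat.le_induction with
    | base => exact le_rfl
    | succ j hnj ih => exact ih.trans (hgrow j (hj₀n.trans hnj))

end Stabilization

section Program

variable {d m n : ℕ} (E : Fin m → Fin n → Matrix (Fin d) (Fin d) ℂ) (M₁ : Matrix (Fin d) (Fin d) ℂ)

lemma progF_eq_sum_conj (k : Fin m) (ρ : Matrix (Fin d) (Fin d) ℂ) :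
    progF E M₁ k ρ = ∑ i, (E k i * M₁) * ρ * (E k i * M₁)ᴴ := by
  simp only [progF, conjTranspose_mul, Matrix.mul_assoc]

lemma progF_posSemidef {ρ : Matrix (Fin d) (Fin d) ℂ} (hρ : ρ.PosSemidef) (k : Fin m) :
    (progF E M₁ k ρ).PosSemidef := by
  rw [progF_eq_sum_conj]
  exact posSemidef_sum _ fun i _ => hρ.mul_mul_conjTranspose_same _

lemma progFStr_posSemidef {ρ : Matrix (Fin d) (Fin d) ℂ} (hρ : ρ.PosSemidef) (r : List (Fin m)) :
    (progFStr E M₁ r ρ).PosSemidef := by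
  induction r generalizing ρ with
  | nil => exact hρ
  | cons k r ih => exact ih (progF_posSemidef E M₁ hρ k)

lemma progFStr_append (u r : List (Fin m)) (ρ : Matrix (Fin d) (Fin d) ℂ) :
    progFStr E M₁ (u ++ r) ρ = progFStr E M₁ r (progFStr E M₁ u ρ) := by
  induction u generalizing ρ with
  | nil => rfl
  | cons k u ih => exact ih _

lemma progFStr_add (r : List (Fin m)) (ρ σ : Matrix (Fin d) (Fin d) ℂ) :
    progFStr E M₁ r (ρ + σ) = progFStr E M₁ r ρ + progFStr E M₁ r σ := by
  induction r generalizing ρ σ with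
  | nil => rfl
  | cons k r ih =>
    simp only [progFStr, progF, Matrix.mul_add, Matrix.add_mul, Finset.sum_add_distrib, ih]

noncomputable def progFStrHom (r : List (Fin m)) :
    Matrix (Fin d) (Fin d) ℂ →+ Matrix (Fin d) (Fin d) ℂ :=
  AddMonoidHom.mk' (progFStr E M₁ r) (progFStr_add E M₁ r)

lemma progFStr_zero (r : List (Fin m)) : progFStr E M₁ r (0 : Matrix (Fin d) (Fin d) ℂ) = 0 :=
  map_zero (progFStrHom E M₁ r)

lemma progFStr_eq_zero_of_isPrefix {u r : List (Fin m)} {ρ : Matrix (Fin d) (Fin d) ℂ}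
    (hur : u <+: r) (h : progFStr E M₁ u ρ = 0) : progFStr E M₁ r ρ = 0 := by
  obtain ⟨t, rfl⟩ := hur
  rw [progFStr_append, h, progFStr_zero]

lemma matKer_progF {ρ : Matrix (Fin d) (Fin d) ℂ} (hρ : ρ.PosSemidef) (k : Fin m) :
    matKer (progF E M₁ k ρ) = ⨅ i, (matKer ρ).comap (E k i * M₁)ᴴ.mulVecLin := by
  rw [progF_eq_sum_conj, PosSemidef.matKer_sum fun i _ => hρ.mul_mul_conjTranspose_same _]
  simp only [Finset.mem_univ, iInf_true, hρ.matKer_mul_mul_conjTranspose]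

lemma matKer_progFStr_mono {ρ σ : Matrix (Fin d) (Fin d) ℂ} (hρ : ρ.PosSemidef)
    (hσ : σ.PosSemidef) (h : matKer ρ ≤ matKer σ) (r : List (Fin m)) :
    matKer (progFStr E M₁ r ρ) ≤ matKer (progFStr E M₁ r σ) := by
  induction r generalizing ρ σ with
  | nil => exact h
  | cons k r ih =>
    refine ih (progF_posSemidef E M₁ hρ k) (progF_posSemidef E M₁ hσ k) ?_
    rw [matKer_progF E M₁ hρ, matKer_progF E M₁ hσ]
    exact iInf_mono fun i => Submodule.comap_mono h

lemma progFStr_eq_zero_of_matKer_le {ρ σ : Matrix (Fin d) (Fin d) ℂ} (hρ : ρ.PosSemidef)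
    (hσ : σ.PosSemidef) (h : matKer ρ ≤ matKer σ) {r : List (Fin m)}
    (hr : progFStr E M₁ r ρ = 0) : progFStr E M₁ r σ = 0 := by
  rw [← matKer_eq_top_iff, eq_top_iff] at hr ⊢
  exact hr.trans (matKer_progFStr_mono E M₁ hρ hσ h r)

end Program

section Reach

variable {d m n : ℕ} (E : Fin m → Fin n → Matrix (Fin d) (Fin d) ℂ) (M₁ : Matrix (Fin d) (Fin d) ℂ)
  {ρ : Matrix (Fin d) (Fin d) ℂ}

/-- `reach E M₁ ρ j = ∑_{|w| ≤ j} F_w(ρ)`, written recursively. -/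
noncomputable def reach (ρ : Matrix (Fin d) (Fin d) ℂ) : ℕ → Matrix (Fin d) (Fin d) ℂ
  | 0 => ρ
  | j + 1 => ρ + ∑ k, progF E M₁ k (reach ρ j)

lemma reach_posSemidef (hρ : ρ.PosSemidef) (j : ℕ) : (reach E M₁ ρ j).PosSemidef := by
  induction j with
  | zero => exact hρ
  | succ j ih => exact hρ.add (posSemidef_sum _ fun k _ => progF_posSemidef E M₁ ih k)

lemma matKer_reach_succ (hρ : ρ.PosSemidef) (j : ℕ) :
    matKer (reach E M₁ ρ (j + 1)) = matKer ρ ⊓ ⨅ k, matKer (progF E M₁ k (reach E M₁ ρ j)) := by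
  have hF := fun k => progF_posSemidef E M₁ (reach_posSemidef E M₁ hρ j) k
  rw [reach, hρ.matKer_add (posSemidef_sum _ fun k _ => hF k),
    PosSemidef.matKer_sum fun k _ => hF k]
  simp only [Finset.mem_univ, iInf_true]

lemma matKer_reach_succ_mono (hρ : ρ.PosSemidef) {i j : ℕ}
    (h : matKer (reach E M₁ ρ i) ≤ matKer (reach E M₁ ρ j)) :
    matKer (reach E M₁ ρ (i + 1)) ≤ matKer (reach E M₁ ρ (j + 1)) := by
  rw [matKer_reach_succ E M₁ hρ, matKer_reach_succ E M₁ hρ]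
  exact inf_le_inf_left _ <| iInf_mono fun k => matKer_progFStr_mono E M₁
    (reach_posSemidef E M₁ hρ i) (reach_posSemidef E M₁ hρ j) h [k]

lemma matKer_reach_le_progFStr (hρ : ρ.PosSemidef) (u : List (Fin m)) :
    matKer (reach E M₁ ρ u.length) ≤ matKer (progFStr E M₁ u ρ) := by
  induction u using List.reverseRecOn with
  | nil => exact le_rfl
  | append_singleton u k ih =>
    rw [List.length_append, List.length_singleton, matKer_reach_succ E M₁ hρ, progFStr_append]
    exact inf_le_right.trans <| (iInf_le _ k).trans <| matKer_progFStr_mono E M₁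
      (reach_posSemidef E M₁ hρ _) (progFStr_posSemidef E M₁ hρ u) ih [k]

lemma progFStr_reach_eq_zero (j : ℕ) (r : List (Fin m))
    (h : ∀ w : List (Fin m), w.length ≤ j → progFStr E M₁ (w ++ r) ρ = 0) :
    progFStr E M₁ r (reach E M₁ ρ j) = 0 := by
  induction j generalizing r with
  | zero => exact h [] le_rfl
  | succ j ih =>
    rw [reach, progFStr_add, show progFStr E M₁ r ρ = 0 from h [] (Nat.zero_le _), zero_add]
    refine (map_sum (progFStrHom E M₁ r) _ _).trans (Finset.sum_eq_zero fun k _ => ?_)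
    refine ih (k :: r) fun w hw => ?_
    simpa using h (w ++ [k]) (by simpa using hw)

/-- The kernels of `reach E M₁ ρ j` stop shrinking by `j = d - 1`, so the support of every
`F_u(ρ)` lies in that of `reach E M₁ ρ (d - 1)`. -/
theorem progFStr_append_eq_zero_of_forall_length_lt (hρ : ρ.PosSemidef) {r : List (Fin m)}
    (h : ∀ w : List (Fin m), w.length < d → progFStr E M₁ (w ++ r) ρ = 0) (u : List (Fin m)) :
    progFStr E M₁ (u ++ r) ρ = 0 := by
  rcases eq_or_ne ρ 0 with rfl | hρ0
  · exact progFStr_zero E M₁ _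
  have hdim : Module.finrank ℂ (matKer ρ) < d := by
    simpa using Submodule.finrank_lt (matKer_eq_top_iff.not.mpr hρ0)
  have hker : matKer (reach E M₁ ρ (d - 1)) ≤ matKer (reach E M₁ ρ u.length) :=
    Submodule.le_of_succ_mono (K := fun j => matKer (reach E M₁ ρ j))
      ((matKer_reach_succ E M₁ hρ 0).trans_le inf_le_left)
      (fun _ _ => matKer_reach_succ_mono E M₁ hρ) (Nat.le_pred_of_lt hdim) _
  rw [progFStr_append]
  exact progFStr_eq_zero_of_matKer_le E M₁ (reach_posSemidef E M₁ hρ _)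
    (progFStr_posSemidef E M₁ hρ u) (hker.trans (matKer_reach_le_progFStr E M₁ hρ u))
    (progFStr_reach_eq_zero E M₁ _ r fun w hw => h w (by omega))

end Reach

section Paths

variable {m : ℕ}

lemma prefixOf_add (s : ℕ → Fin m) (a b : ℕ) :
    prefixOf s (a + b) = prefixOf s a ++ prefixOf (fun i => s (a + i)) b := by
  simp [prefixOf, List.ofFn_add]

lemma prefixOf_isPrefix (s : ℕ → Fin m) {a b : ℕ} (h : a ≤ b) : prefixOf s a <+: prefixOf s b := by
  obtain ⟨c, rfl⟩ := Nat.exists_eq_add_of_le h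
  rw [prefixOf_add]
  exact List.prefix_append _ _

lemma Fair.shift {s : ℕ → Fin m} (hs : Fair s) (c : ℕ) : Fair fun i => s (c + i) := by
  intro k N
  obtain ⟨j, hj, hsj⟩ := hs k (c + N)
  exact ⟨j - c, by omega, show s (c + (j - c)) = k by rwa [Nat.add_sub_cancel' (by omega)]⟩

lemma exists_prefixOf_eq {L : ℕ → List (Fin m)} (hL : ∀ t, L t <+: L (t + 1))
    (hlen : ∀ t, t ≤ (L t).length) : ∃ s : ℕ → Fin m, ∀ t, prefixOf s (L t).length = L t := by
  have hmono : ∀ a b, a ≤ b → L a <+: L b := fun a b h => by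
    induction b, h using Nat.le_induction with
    | base => exact List.prefix_rfl
    | succ b _ ih => exact ih.trans (hL b)
  refine ⟨fun i => (L (i + 1))[i]'(hlen (i + 1)), fun t =>
    List.ext_getElem (by simp [prefixOf]) fun i _ hi => ?_⟩
  simp only [prefixOf, List.getElem_ofFn]
  rcases le_total (i + 1) t with h | h
  · exact (hmono _ _ h).getElem _
  · exact ((hmono _ _ h).getElem hi).symm

lemma le_length_flatten_map_range {g : ℕ → List (Fin m)} (hg : ∀ t, g t ≠ []) (N : ℕ) :
    N ≤ ((List.range N).map g).flatten.length := by
  induction N with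
  | zero => exact le_rfl
  | succ N ih =>
    have := List.length_pos_iff.mpr (hg N)
    simp only [List.range_succ, List.map_append, List.map_singleton, List.flatten_append,
      List.flatten_singleton, List.length_append]
    omega

lemma InOmega.exists_ge_eq {A : Set (List (Fin m))} {s : ℕ → Fin m} (h : InOmega A s)
    {k : Fin m} (hk : ∀ f ∈ A, k ∈ f) (N : ℕ) : ∃ j ≥ N, s j = k := by
  obtain ⟨g, hgA, hpre⟩ := h
  set L := ((List.range N).map g).flatten
  have hsplit : prefixOf s L.length ++ prefixOf (fun i => s (L.length + i)) (g N).length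
      = L ++ g N := by
    have hLN : ((List.range (N + 1)).map g).flatten = L ++ g N := by simp [L, List.range_succ]
    rw [← prefixOf_add, ← List.length_append, ← hLN, hpre]
  have hgN : prefixOf (fun i => s (L.length + i)) (g N).length = g N :=
    (List.append_inj hsplit (by simp [prefixOf])).2
  have hkN := hk _ (hgA N)
  rw [← hgN, prefixOf, List.mem_ofFn] at hkN
  obtain ⟨i, hi⟩ := hkN
  have hLN : N ≤ L.length :=
    le_length_flatten_map_range (fun t => List.ne_nil_of_mem (hk _ (hgA t))) N
  exact ⟨L.length + i, by omega, hi⟩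

end Paths

lemma List.flatten_ofFn_cons_of_last_eq_nil {α : Type*} {j : ℕ} (a : Fin (j + 1) → α)
    (t : Fin (j + 1) → List α) (ht : t (Fin.last j) = []) :
    (List.ofFn fun i => a i :: t i).flatten
      = a 0 :: (List.ofFn fun i : Fin j => t i.castSucc ++ [a i.succ]).flatten := by
  induction j with
  | zero => simp [show t 0 = [] from ht]
  | succ j ih =>
    rw [List.ofFn_succ, List.flatten_cons,
      ih (fun i => a i.succ) (fun i => t i.succ) (by rwa [Fin.succ_last]), List.ofFn_succ]
    simp

section PiPieces

variable {m d : ℕ}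

lemma mem_of_mem_PiPieces {f : List (Fin m)} (hf : f ∈ PiPieces m d) (k : Fin m) : k ∈ f := by
  obtain ⟨p, t, -, -, rfl⟩ := hf
  simp only [List.mem_flatten, List.mem_ofFn]
  exact ⟨_, ⟨p.symm k, rfl⟩, by simp⟩

lemma InOmega.fair {s : ℕ → Fin m} (h : InOmega (PiPieces m d) s) : Fair s :=
  fun k => h.exists_ge_eq fun _ hf => mem_of_mem_PiPieces hf k

lemma cons_flatten_mem_PiPieces (p : Equiv.Perm (Fin (m + 1))) {w : Fin m → List (Fin (m + 1))}
    (hw : ∀ i, (w i).length < d) (hd : 0 < d) :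
    p 0 :: (List.ofFn fun i => w i ++ [p i.succ]).flatten ∈ PiPieces (m + 1) d := by
  refine ⟨p, Fin.lastCases [] w, Fin.lastCases (by simpa) (by simpa using hw), fun i hi => ?_, ?_⟩
  · obtain rfl : i = Fin.last m := Fin.ext (by simpa using hi)
    simp
  · rw [List.flatten_ofFn_cons_of_last_eq_nil _ _ (by simp)]
    simp

end PiPieces

section NeverTerminates

variable {d m n : ℕ} (E : Fin m → Fin n → Matrix (Fin d) (Fin d) ℂ) (M₁ : Matrix (Fin d) (Fin d) ℂ)

def NeverTerminates (τ : Matrix (Fin d) (Fin d) ℂ) (s : ℕ → Fin m) : Prop :=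
  ∀ N, progFStr E M₁ (prefixOf s N) τ ≠ 0

variable {E M₁} {τ : Matrix (Fin d) (Fin d) ℂ} {s : ℕ → Fin m}

lemma NeverTerminates.ne_zero (h : NeverTerminates E M₁ τ s) : τ ≠ 0 := by
  simpa [prefixOf, progFStr] using h 0

lemma NeverTerminates.shift (h : NeverTerminates E M₁ τ s) (c : ℕ) :
    NeverTerminates E M₁ (progFStr E M₁ (prefixOf s c) τ) fun i => s (c + i) := fun N => by
  rw [← progFStr_append, ← prefixOf_add]
  exact h _

lemma NeverTerminates.exists_short_replacement (hτ : τ.PosSemidef) (h : NeverTerminates E M₁ τ s)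
    (c : ℕ) : ∃ w : List (Fin m), w.length < d ∧
      NeverTerminates E M₁ (progFStr E M₁ w τ) fun i => s (c + i) := by
  by_contra! hterm
  simp only [NeverTerminates, not_forall, not_not] at hterm
  choose! N hN using hterm
  -- only finitely many words are shorter than `d`, so one horizon `B` serves them all
  obtain ⟨B, hB⟩ := ((List.finite_length_lt (Fin m) d).image N).bddAbove
  apply h (c + B)
  rw [prefixOf_add]
  refine progFStr_append_eq_zero_of_forall_length_lt E M₁ hτ (fun w hw => ?_) _
  rw [progFStr_append]
  exact progFStr_eq_zero_of_isPrefix E M₁ (prefixOf_isPrefix _ (hB ⟨w, hw, rfl⟩)) (hN w hw)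

lemma NeverTerminates.exists_block (hτ : τ.PosSemidef) (hs : Fair s)
    (h : NeverTerminates E M₁ τ s) (k : Fin m) : ∃ w : List (Fin m), w.length < d ∧
      ∃ s' : ℕ → Fin m, Fair s' ∧ NeverTerminates E M₁ (progFStr E M₁ (w ++ [k]) τ) s' := by
  obtain ⟨c, -, hc⟩ := hs k 0
  obtain ⟨w, hw, hNT⟩ := h.exists_short_replacement hτ c
  refine ⟨w, hw, _, (hs.shift c).shift 1, ?_⟩
  simpa [progFStr_append, prefixOf, hc] using hNT.shift 1

lemma NeverTerminates.exists_blocks (hτ : τ.PosSemidef) (hs : Fair s)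
    (h : NeverTerminates E M₁ τ s) {j : ℕ} (q : Fin j → Fin m) :
    ∃ w : Fin j → List (Fin m), (∀ i, (w i).length < d) ∧ ∃ s' : ℕ → Fin m, Fair s' ∧
      NeverTerminates E M₁ (progFStr E M₁ (List.ofFn fun i => w i ++ [q i]).flatten τ) s' := by
  induction j generalizing τ s with
  | zero => exact ⟨Fin.elim0, fun i => i.elim0, s, hs, h⟩
  | succ j ih =>
    obtain ⟨w₀, hw₀, s₁, hs₁, h₁⟩ := h.exists_block hτ hs (q 0)
    obtain ⟨w, hw, s', hs', h'⟩ := ih (progFStr_posSemidef E M₁ hτ _) hs₁ h₁ fun i => q i.succ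
    refine ⟨Fin.cons w₀ w, Fin.cases hw₀ hw, s', hs', ?_⟩
    have hsplit :
        (List.ofFn fun i => (Fin.cons w₀ w : Fin (j + 1) → List (Fin m)) i ++ [q i]).flatten
        = (w₀ ++ [q 0]) ++ (List.ofFn fun i => w i ++ [q i.succ]).flatten := by
      simp [List.ofFn_succ]
    rwa [hsplit, progFStr_append]

end NeverTerminates

section Pieces

variable {d m n : ℕ} {E : Fin (m + 1) → Fin n → Matrix (Fin d) (Fin d) ℂ}
  {M₁ τ : Matrix (Fin d) (Fin d) ℂ} {s : ℕ → Fin (m + 1)}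

lemma NeverTerminates.exists_mem_PiPieces (hτ : τ.PosSemidef) (hs : Fair s)
    (h : NeverTerminates E M₁ τ s) : ∃ g ∈ PiPieces (m + 1) d, ∃ s' : ℕ → Fin (m + 1), Fair s' ∧
      NeverTerminates E M₁ (progFStr E M₁ g τ) s' := by
  have hd : 0 < d :=
    Nat.pos_of_ne_zero fun hd => h.ne_zero (by subst hd; exact Subsingleton.elim _ _)
  -- a piece opens with a process rather than a detour: let it open with the next step `s 0`
  set p := Equiv.swap 0 (s 0)
  obtain ⟨w, hw, s', hs', h'⟩ :=
    (h.shift 1).exists_blocks (progFStr_posSemidef E M₁ hτ _) (hs.shift 1) fun i => p i.succ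
  refine ⟨_, cons_flatten_mem_PiPieces p hw hd, s', hs', ?_⟩
  simpa [p, prefixOf, progFStr] using h'

theorem exists_inOmega_PiPieces_neverTerminates {ρ₀ : Matrix (Fin d) (Fin d) ℂ}
    (hρ₀ : ρ₀.PosSemidef) (hs : Fair s) (h : NeverTerminates E M₁ ρ₀ s) :
    ∃ s' : ℕ → Fin (m + 1), InOmega (PiPieces (m + 1) d) s' ∧ NeverTerminates E M₁ ρ₀ s' := by
  let State := {x : Matrix (Fin d) (Fin d) ℂ × (ℕ → Fin (m + 1)) //
    x.1.PosSemidef ∧ Fair x.2 ∧ NeverTerminates E M₁ x.1 x.2}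
  have hstep : ∀ x : State, ∃ g ∈ PiPieces (m + 1) d, ∃ y : State,
      y.1.1 = progFStr E M₁ g x.1.1 := by
    rintro ⟨⟨τ, s⟩, hτ, hs, h⟩
    obtain ⟨g, hg, s', hs', h'⟩ := h.exists_mem_PiPieces hτ hs
    exact ⟨g, hg, ⟨(_, s'), progFStr_posSemidef E M₁ hτ g, hs', h'⟩, rfl⟩
  choose piece hpiece next hnext using hstep
  let x : ℕ → State := fun t => next^[t] ⟨(ρ₀, s), hρ₀, hs, h⟩
  let L : ℕ → List (Fin (m + 1)) := fun t => ((List.range t).map (piece ∘ x)).flatten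
  have hLsucc : ∀ t, L (t + 1) = L t ++ piece (x t) := by simp [L, List.range_succ]
  have hxL : ∀ t, (x t).1.1 = progFStr E M₁ (L t) ρ₀ := by
    intro t
    induction t with
    | zero => rfl
    | succ t ih =>
      rw [hLsucc, progFStr_append, ← ih, ← hnext]
      exact congrArg (fun y : State => y.1.1) (Function.iterate_succ_apply' _ _ _)
  have hlen : ∀ t, t ≤ (L t).length := le_length_flatten_map_range
    (fun t => List.ne_nil_of_mem (mem_of_mem_PiPieces (hpiece (x t)) 0))
  obtain ⟨s', hs'⟩ : ∃ s', ∀ t, prefixOf s' (L t).length = L t :=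
    exists_prefixOf_eq (fun t => ⟨piece (x t), (hLsucc t).symm⟩) hlen
  refine ⟨s', ⟨piece ∘ x, fun t => hpiece _, hs'⟩, fun N hN => (x N).2.2.2.ne_zero ?_⟩
  rw [hxL]
  exact progFStr_eq_zero_of_isPrefix E M₁ (hs' N ▸ prefixOf_isPrefix s' (hlen N)) hN

end Pieces

theorem terminates_fair_iff_terminates_PiOmega_general {d m n : ℕ}
    (E : Fin m → Fin n → Matrix (Fin d) (Fin d) ℂ)
    (M₁ : Matrix (Fin d) (Fin d) ℂ)
    (ρ₀ : Matrix (Fin d) (Fin d) ℂ) (hρ₀ : ρ₀.PosSemidef) :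
    (∀ s : ℕ → Fin m, Fair s → ∃ N : ℕ, progFStr E M₁ (prefixOf s N) ρ₀ = 0)
      ↔ (∀ s : ℕ → Fin m, InOmega (PiPieces m d) s →
          ∃ N : ℕ, progFStr E M₁ (prefixOf s N) ρ₀ = 0) := by
  refine ⟨fun h s hs => h s hs.fair, fun h s hs => ?_⟩
  obtain ⟨m, rfl⟩ : ∃ m', m = m' + 1 := Nat.exists_eq_add_one.mpr (s 0).pos
  by_contra! hNT
  obtain ⟨s', hs', hNT'⟩ := exists_inOmega_PiPieces_neverTerminates hρ₀ hs hNT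
  obtain ⟨N, hN⟩ := h s' hs'
  exact hNT' N hN

theorem terminates_fair_iff_terminates_PiOmega {d m n : ℕ}
    (E : Fin m → Fin n → Matrix (Fin d) (Fin d) ℂ)
    (M₀ M₁ : Matrix (Fin d) (Fin d) ℂ)
    (hE : ∀ k, ∑ i, (E k i)ᴴ * E k i = 1)
    (hM : M₀ᴴ * M₀ + M₁ᴴ * M₁ = 1)
    (ρ₀ : Matrix (Fin d) (Fin d) ℂ) (hρ₀ : ρ₀.PosSemidef) (htr : ρ₀.trace ≤ 1) :
    (∀ s : ℕ → Fin m, Fair s → ∃ N : ℕ, progFStr E M₁ (prefixOf s N) ρ₀ = 0)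
      ↔ (∀ s : ℕ → Fin m, InOmega (PiPieces m d) s →
          ∃ N : ℕ, progFStr E M₁ (prefixOf s N) ρ₀ = 0) :=
  terminates_fair_iff_terminates_PiOmega_general E M₁ ρ₀ hρ₀
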